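/- Let G be a non-associative semiring (a type with an additively commutative monoid structure with neutral element 0, a multiplication with unit 1, distributing over addition, and with 0 annihilating under multiplication), and let f, g : G^n → G be affine functions with n ≥ 4. If f and g are linear, or if addition in G is cancellative, then deck f = deck g if and only if f ≡ g. -/

import Mathlib

/-!
An affine function `x ↦ ∑ aᵢ xᵢ + c` is determined up to equivalence by its value `c` at `0` and
the multiset of its values `aᵢ + c` at the unit vectors, i.e. (adding `c` being injective) by `c`
and the multiset `A` of its coefficients. The minor `f_{ij}` is affine with the same constant and
coefficient multiset `A - {aᵢ, aⱼ} + {aᵢ + aⱼ}`, so it remains to recover a multiset `A` of size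
`m ≥ 4` from its cards `A - P + {∑ P}`, `P` a 2-submultiset of `A`.

All cards together consist of the pair sums of `A` and `C(m-1, 2)` copies of `A`. If `A ≠ B` have
the same cards, then `C(m-1, 2)` copies of `A - B` occur among the pair sums of `B`, and (writing
`A = x + D`, `B = y + D` when `|A - B| = 1`) this forces `m = 4`. If `|A - B| = 2`, the pair sums
of `B` are then all in `A - B` and those of `A` in `B - A`, yet the pair sum of `A ∩ B` is both.
If `|A - B| = 1`, then `y + d = x` and `x + d = y` for the three `d ∈ D`, so `∑ A = y` and
`∑ B = x`, whereas every card has the sum of the multiset it comes from.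
-/

/-- The identification minor f_{i,j} (for i < j) of a function of arity n+1:
the j-th argument is identified with the i-th one, i.e.
f_I(x_1, …, x_n) = f(y_1, …, y_{n+1}) where y_k = x_k for k < j, y_j = x_i,
and y_k = x_{k-1} for k > j. -/
def funMinor {G : Type*} {n : ℕ} (f : (Fin (n + 1) → G) → G) (i j : Fin (n + 1))
    (hij : i < j) : (Fin n → G) → G :=
  fun x => f (fun k =>
    if hk : (k : ℕ) < (j : ℕ) then
      x ⟨(k : ℕ), by have := j.isLt; omega⟩
    else if hk' : (k : ℕ) = (j : ℕ) then
      x ⟨(i : ℕ), by have := j.isLt; have hij' : (i : ℕ) < (j : ℕ) := hij; omega⟩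
    else
      x ⟨(k : ℕ) - 1, by have := k.isLt; omega⟩)

/-- The multiset of all identification minors f_{i,j}, i < j, of f. -/
def fminors {G : Type*} {n : ℕ} (f : (Fin (n + 1) → G) → G) :
    Multiset ((Fin n → G) → G) :=
  ((Finset.univ.filter
      (fun p : Fin (n + 1) × Fin (n + 1) => p.1 < p.2)).attach.val.map
    (fun p => funMinor f p.1.1 p.1.2
      (by have h := p.2; rw [Finset.mem_filter] at h; exact h.2)))

/-- Equivalence of functions of several arguments: g is obtained from f by
permuting arguments. -/
def funEquiv {G : Type*} {m : ℕ} (f g : (Fin m → G) → G) : Prop :=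
  ∃ σ : Equiv.Perm (Fin m), ∀ x : Fin m → G, f x = g (fun i => x (σ i))

theorem Nat.eq_three_of_choose_two_le {n : ℕ} (hn : 3 ≤ n) (h : n.choose 2 ≤ n) : n = 3 := by
  obtain ⟨j, rfl⟩ := Nat.exists_eq_add_of_le' hn
  simp only [Nat.choose_succ_succ', zero_add, Nat.choose_one_right, Nat.choose_zero_right] at h
  omega

namespace Multiset
variable {α : Type*} [DecidableEq α]

theorem sum_map_tsub_powersetCard (A : Multiset α) (k : ℕ) :
    ((A.powersetCard k).map (A - ·)).sum = (card A - 1).choose k • A := by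
  induction A using Multiset.induction_on generalizing k with
  | empty => cases k <;> simp
  | cons a A ih =>
    cases k with
    | zero => simp
    | succ k =>
      have hsub : ∀ P ∈ A.powersetCard (k + 1), a ::ₘ A - P = {a} + (A - P) := fun P hP => by
        rw [cons_sub_of_le _ (mem_powersetCard.1 hP).1, singleton_add]
      have hcons : ∀ Q ∈ A.powersetCard k, ((a ::ₘ A - ·) ∘ cons a) Q = A - Q := fun Q _ => by
        rw [Function.comp_apply, sub_cons, erase_cons_head]
      have hpascal : (card A - 1).choose (k + 1) • A + (card A - 1).choose k • A
          = (card A).choose (k + 1) • A := by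
        rcases eq_or_ne A 0 with rfl | hA
        · simp
        · obtain ⟨m, hm⟩ := Nat.exists_eq_succ_of_ne_zero (card_pos.2 hA).ne'
          rw [← add_nsmul, hm, Nat.choose_succ_succ', Nat.succ_sub_one, add_comm]
      rw [powersetCard_cons, map_add, sum_add, map_congr rfl hsub, map_map,
        map_congr rfl hcons, sum_map_add, ih, ih, map_const', sum_replicate,
        card_powersetCard, card_cons, Nat.add_sub_cancel, add_assoc, hpascal, ← nsmul_add,
        singleton_add]

theorem nsmul_tsub_le_of_add_nsmul_eq {P Q A B : Multiset α} {k : ℕ}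
    (h : P + k • A = Q + k • B) : k • (A - B) ≤ Q := by
  rw [le_iff_count]
  intro z
  have hz := congrArg (count z) h
  simp only [count_add, count_nsmul] at hz
  rw [count_nsmul, count_sub, Nat.mul_sub]
  omega

theorem card_tsub_eq_of_card_eq {A B : Multiset α} (hcard : card B = card A) :
    card (B - A) = card (A - B) := by
  have hA := congrArg card (sub_add_inter A B)
  have hB := congrArg card (sub_add_inter B A)
  rw [card_add] at hA hB
  rw [inter_comm] at hB
  omega

end Multiset

theorem Multiset.rel_const_and_iff {α β : Type*} {r : α → β → Prop} {P : Prop}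
    {s : Multiset α} {t : Multiset β} (hs : s ≠ 0) :
    Rel (fun a b => P ∧ r a b) s t ↔ P ∧ Rel r s t := by
  constructor
  · intro h
    obtain ⟨a, ha⟩ := exists_mem_of_ne_zero hs
    obtain ⟨b, -, hab⟩ := exists_mem_of_rel_of_mem h ha
    exact ⟨hab.1, h.mono fun _ _ _ _ hab => hab.2⟩
  · rintro ⟨hP, h⟩
    exact h.mono fun _ _ _ _ hab => ⟨hP, hab⟩

theorem Fintype.exists_perm_comp_eq_of_map_univ_eq {ι α : Type*} [Fintype ι] {a b : ι → α}
    (h : Finset.univ.val.map a = Finset.univ.val.map b) :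
    ∃ σ : Equiv.Perm ι, ∀ i, b (σ i) = a i := by
  classical
  have hfiber : ∀ z, Fintype.card {i // a i = z} = Fintype.card {i // b i = z} := fun z => by
    have hz := congrArg (Multiset.count z) h
    simp only [Multiset.count_map] at hz
    simpa [Fintype.card_subtype, Finset.card_def, Finset.filter_val, eq_comm] using hz
  let e z : {i // a i = z} ≃ {i // b i = z} := Fintype.equivOfCardEq (hfiber z)
  refine ⟨(Equiv.sigmaFiberEquiv a).symm.trans
    ((Equiv.sigmaCongrRight e).trans (Equiv.sigmaFiberEquiv b)), fun i => ?_⟩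
  exact (e (a i) ⟨i, rfl⟩).2

open Finset in
theorem map_pair_filter_lt_eq_powersetCard {α : Type*} [Fintype α] [LinearOrder α] :
    (univ.filter fun p : α × α => p.1 < p.2).val.map (fun p => ({p.1, p.2} : Multiset α))
      = (univ.val : Multiset α).powersetCard 2 := by
  refine (Multiset.Nodup.ext ?_ (univ.nodup.powersetCard)).2 fun P => ?_
  · refine (nodup _).map_on fun p hp q hq hpq => ?_
    simp only [Finset.mem_val, mem_filter, mem_univ, true_and] at hp hq
    have h1 : p.1 ∈ ({q.1, q.2} : Multiset α) := hpq ▸ by simp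
    have h2 : p.2 ∈ ({q.1, q.2} : Multiset α) := hpq ▸ by simp
    have h3 : q.1 ∈ ({p.1, p.2} : Multiset α) := hpq.symm ▸ by simp
    simp only [Multiset.insert_eq_cons, Multiset.mem_cons, Multiset.mem_singleton] at h1 h2 h3
    obtain h1 | h1 := h1 <;> obtain h2 | h2 := h2 <;> obtain h3 | h3 := h3 <;> ext <;> order
  · simp only [Multiset.mem_map, Finset.mem_val, mem_filter, mem_univ, true_and,
      Multiset.mem_powersetCard, Multiset.card_eq_two]
    constructor
    · rintro ⟨p, hp, rfl⟩
      refine ⟨(Multiset.le_iff_subset ?_).2 fun x _ => mem_univ x, p.1, p.2, rfl⟩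
      simp [hp.ne]
    · rintro ⟨hle, x, y, rfl⟩
      have hxy : x ≠ y := by simpa using Multiset.nodup_of_le hle univ.nodup
      rcases hxy.lt_or_gt with h | h
      · exact ⟨(x, y), h, rfl⟩
      · exact ⟨(y, x), h, Multiset.pair_comm y x⟩

section SumDeck
variable {M : Type*} [AddCommMonoid M]

open Multiset

def pairSums (A : Multiset M) : Multiset M := (A.powersetCard 2).map sum

def sumDeck [DecidableEq M] (A : Multiset M) : Multiset (Multiset M) :=
  (A.powersetCard 2).map fun P => P.sum ::ₘ (A - P)

theorem pairSums_cons (x : M) (D : Multiset M) :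
    pairSums (x ::ₘ D) = D.map (x + ·) + pairSums D := by
  rw [pairSums, powersetCard_cons, powersetCard_one, map_add, map_map, map_map, add_comm]
  congr 1
  exact map_congr rfl fun d _ => by simp

theorem card_pairSums (A : Multiset M) : card (pairSums A) = (card A).choose 2 := by
  rw [pairSums, card_map, card_powersetCard]

variable [DecidableEq M]

theorem join_sumDeck (A : Multiset M) :
    (sumDeck A).join = pairSums A + (card A - 1).choose 2 • A := by
  simp only [sumDeck, join, ← singleton_add, sum_map_add, sum_map_tsub_powersetCard]
  rw [show (fun P : Multiset M => ({P.sum} : Multiset M)) = singleton ∘ sum from rfl,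
    ← map_map, sum_map_singleton, pairSums]

theorem sum_eq_of_mem_sumDeck {A K : Multiset M} (hK : K ∈ sumDeck A) : K.sum = A.sum := by
  obtain ⟨P, hP, rfl⟩ := mem_map.1 hK
  rw [sum_cons, ← sum_add, add_tsub_cancel_of_le (mem_powersetCard.1 hP).1]

theorem card_sumDeck (A : Multiset M) : card (sumDeck A) = (card A).choose 2 := by
  rw [sumDeck, card_map, card_powersetCard]

theorem sum_eq_of_sumDeck_eq {A B : Multiset M} (hA : 2 ≤ card A) (h : sumDeck A = sumDeck B) :
    A.sum = B.sum := by
  have hne : sumDeck A ≠ 0 := card_pos.1 (by rw [card_sumDeck]; exact Nat.choose_pos hA)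
  obtain ⟨K, hK⟩ := exists_mem_of_ne_zero hne
  rw [← sum_eq_of_mem_sumDeck hK, sum_eq_of_mem_sumDeck (h ▸ hK)]

theorem pairSums_add_nsmul_eq_of_sumDeck_eq {A B : Multiset M} (hcard : card B = card A)
    (h : sumDeck A = sumDeck B) :
    pairSums A + (card A - 1).choose 2 • A = pairSums B + (card A - 1).choose 2 • B := by
  have := congrArg join h
  rwa [join_sumDeck, join_sumDeck, hcard] at this

theorem map_add_add_nsmul_eq_of_sumDeck_cons_eq {x y : M} {D : Multiset M}
    (h : sumDeck (x ::ₘ D) = sumDeck (y ::ₘ D)) :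
    D.map (x + ·) + (card D).choose 2 • {x} = D.map (y + ·) + (card D).choose 2 • {y} := by
  have hpair := pairSums_add_nsmul_eq_of_sumDeck_eq (by rw [card_cons, card_cons]) h
  rw [card_cons, Nat.add_sub_cancel, pairSums_cons, pairSums_cons, ← singleton_add,
    ← singleton_add, nsmul_add, nsmul_add] at hpair
  exact add_right_cancel (b := pairSums D + _ • D) (by convert hpair using 1 <;> abel)

theorem eq_of_sumDeck_cons_eq {x y : M} {D : Multiset M} (hD : 3 ≤ card D)
    (h : sumDeck (x ::ₘ D) = sumDeck (y ::ₘ D)) : x = y := by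
  by_contra hxy
  set k := (card D).choose 2
  have hkey := map_add_add_nsmul_eq_of_sumDeck_cons_eq h
  have hle : ∀ {u v : M}, u ≠ v → D.map (u + ·) + k • {u} = D.map (v + ·) + k • {v} →
      replicate k u ≤ D.map (v + ·) := fun {u v} huv huv' => by
    have := nsmul_tsub_le_of_add_nsmul_eq huv'
    rwa [sub_singleton, erase_of_notMem (by simpa using huv.symm), nsmul_singleton] at this
  have hxle := hle hxy hkey
  have hyle := hle (Ne.symm hxy) hkey.symm
  have hD3 : card D = 3 := Nat.eq_three_of_choose_two_le hD (by simpa using card_le_card hxle)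
  have hk : k = 3 := by simp only [k, hD3]; rfl
  have hadd : ∀ {u v : M}, replicate k u ≤ D.map (v + ·) → ∀ d ∈ D, v + d = u :=
    fun {u v} huv d hd => by
      refine eq_of_mem_replicate (n := k) ?_
      rw [eq_of_le_of_card_le huv (by simp [hk, hD3])]
      exact mem_map_of_mem _ hd
  obtain ⟨d₁, d₂, d₃, rfl⟩ := card_eq_three.1 hD3
  have hsum := sum_eq_of_sumDeck_eq (by simp) h
  simp only [insert_eq_cons, sum_cons, sum_singleton] at hsum
  have hx := hadd hxle
  have hy := hadd hyle
  simp only [insert_eq_cons, mem_cons, mem_singleton, forall_eq_or_imp, forall_eq] at hx hy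
  apply hxy
  calc x = y + d₁ + d₂ + d₃ := by rw [hx.1, hy.2.1, hx.2.2]
    _ = x + d₁ + d₂ + d₃ := by simpa only [add_assoc] using hsum.symm
    _ = y := by rw [hy.1, hx.2.1, hy.2.2]

theorem card_tsub_le_one_of_sumDeck_eq {A B : Multiset M} (hA : 4 ≤ card A)
    (hcard : card B = card A) (h : sumDeck A = sumDeck B) : card (A - B) ≤ 1 := by
  by_contra he
  set k := (card A - 1).choose 2
  have hpair := pairSums_add_nsmul_eq_of_sumDeck_eq hcard h
  have hXle : k • (A - B) ≤ pairSums B := nsmul_tsub_le_of_add_nsmul_eq hpair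
  have hYle : k • (B - A) ≤ pairSums A := nsmul_tsub_le_of_add_nsmul_eq hpair.symm
  have hpascal : (card A).choose 2 = (card A - 1) + k := by
    conv_lhs => rw [← Nat.sub_add_cancel (by omega : 1 ≤ card A)]
    rw [Nat.choose_succ_succ', Nat.choose_one_right]
  have hbound : k * card (A - B) ≤ (card A - 1) + k := by
    simpa [card_pairSums, hcard, hpascal] using card_le_card hXle
  have hA4 : card A = 4 := by
    have := Nat.eq_three_of_choose_two_le (n := card A - 1) (by omega) (by nlinarith)
    omega
  have hk : k = 3 := by simp only [k, hA4]; rfl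
  have he2 : card (A - B) = 2 := by rw [hk, hA4] at hbound; omega
  have hXeq : k • (A - B) = pairSums B := eq_of_le_of_card_le hXle <| by
    simp [card_pairSums, hcard, hA4, he2, hk]; decide
  have hYeq : k • (B - A) = pairSums A := eq_of_le_of_card_le hYle <| by
    simp [card_pairSums, card_tsub_eq_of_card_eq hcard, hA4, he2, hk]; decide
  obtain ⟨z, hz⟩ : ∃ z, z ∈ pairSums (A ∩ B) := exists_mem_of_ne_zero <| card_pos.1 <| by
    have := congrArg card (sub_add_inter A B)
    rw [card_add, he2, hA4] at this
    rw [card_pairSums, show card (A ∩ B) = 2 by omega]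
    decide
  have hsub : ∀ {C : Multiset M}, A ∩ B ≤ C → z ∈ pairSums C :=
    fun hC => mem_of_le (map_le_map (powersetCard_mono 2 hC)) hz
  have hzX := (mem_nsmul.1 (hXeq ▸ hsub inter_le_right)).2
  have hzY := (mem_nsmul.1 (hYeq ▸ hsub inter_le_left)).2
  rw [mem_sub] at hzX hzY
  omega

theorem eq_of_sumDeck_eq {A B : Multiset M} (hA : 4 ≤ card A) (hcard : card B = card A)
    (h : sumDeck A = sumDeck B) : A = B := by
  have hAB := sub_add_inter A B
  have hBA := sub_add_inter B A
  rw [inter_comm] at hBA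
  have hYX := card_tsub_eq_of_card_eq hcard
  rcases Nat.le_one_iff_eq_zero_or_eq_one.1 (card_tsub_le_one_of_sumDeck_eq hA hcard h) with
    hX | hX
  · rw [card_eq_zero.1 hX, zero_add] at hAB
    rw [card_eq_zero.1 (hYX.trans hX), zero_add] at hBA
    exact hAB.symm.trans hBA
  · obtain ⟨x, hx⟩ := card_eq_one.1 hX
    obtain ⟨y, hy⟩ := card_eq_one.1 (hYX.trans hX)
    rw [hx, singleton_add] at hAB
    rw [hy, singleton_add] at hBA
    have hD : 3 ≤ card (A ∩ B) := by
      have := congrArg card hAB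
      rw [card_cons] at this
      omega
    have hxy := eq_of_sumDeck_cons_eq (x := x) (y := y) hD (by rwa [hAB, hBA])
    rw [hxy] at hAB
    exact hAB.symm.trans hBA

theorem sumDeck_map_univ {m : ℕ} (a : Fin m → M) :
    (Finset.univ.filter fun p : Fin m × Fin m => p.1 < p.2).val.map
        (fun p => (a p.1 + a p.2) ::ₘ (Finset.univ.val.map a - {a p.1, a p.2}))
      = sumDeck (Finset.univ.val.map a) := by
  rw [sumDeck, powersetCard_map, ← map_pair_filter_lt_eq_powersetCard, map_map, map_map]
  exact map_congr rfl fun p _ => by simp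

end SumDeck

theorem funMinor_eq_insertNth {G : Type*} {n : ℕ} (f : (Fin (n + 1) → G) → G) {i j : Fin (n + 1)}
    (hij : i < j) (x : Fin n → G) :
    funMinor f i j hij x = f (Fin.insertNth j (x (i.castPred (Fin.ne_last_of_lt hij))) x) := by
  unfold funMinor
  congr 1
  ext k
  rcases Fin.eq_self_or_eq_succAbove j k with rfl | ⟨z, rfl⟩
  · simp only [lt_irrefl, dite_false, dite_true, Fin.insertNth_apply_same]
    rfl
  · rw [Fin.insertNth_apply_succAbove]
    rcases Fin.castSucc_lt_or_lt_succ j z with hz | hz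
    · rw [Fin.succAbove_of_castSucc_lt _ _ hz]
      rw [dif_pos (by simpa [Fin.lt_def] using hz)]
      rfl
    · rw [Fin.succAbove_of_lt_succ _ _ hz]
      rw [Fin.lt_def, Fin.val_succ] at hz
      rw [dif_neg (by rw [Fin.val_succ]; omega), dif_neg (by rw [Fin.val_succ]; omega)]
      simp

section AffineFunctions
variable {G : Type*} [AddCommMonoid G]

open Finset

def minorCoeff {n : ℕ} (a : Fin (n + 1) → G) {i j : Fin (n + 1)} (hij : i < j) : Fin n → G :=
  Function.update (a ∘ j.succAbove) (i.castPred (Fin.ne_last_of_lt hij)) (a i + a j)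

theorem map_minorCoeff [DecidableEq G] {n : ℕ} (a : Fin (n + 1) → G) {i j : Fin (n + 1)}
    (hij : i < j) :
    univ.val.map (minorCoeff a hij) = (a i + a j) ::ₘ (univ.val.map a - {a i, a j}) := by
  set i' := i.castPred (Fin.ne_last_of_lt hij)
  have hi' : j.succAbove i' = i := Fin.succAbove_castPred_of_lt j i hij
  set R := (univ.val.erase i').map (a ∘ j.succAbove)
  have hsplit : ∀ w : Fin n → G, univ.val.map w = w i' ::ₘ (univ.val.erase i').map w :=
    fun w => by
      rw [← Multiset.map_cons, Multiset.cons_erase (mem_univ i' : i' ∈ (univ : Finset (Fin n)).val)]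
  have hA : univ.val.map a = {a i, a j} + R := by
    rw [Fin.univ_succAbove n j, cons_val, map_val, Multiset.map_cons, Multiset.map_map,
      Fin.coe_succAboveEmb, hsplit, Function.comp_apply, hi']
    simp [R, Multiset.cons_swap (a i)]
  rw [hA, add_tsub_cancel_left, hsplit]
  simp only [minorCoeff, R]
  rw [Function.update_self]
  congr 1
  exact Multiset.map_congr rfl fun k hk => Function.update_of_ne
    ((Multiset.Nodup.mem_erase_iff (univ : Finset (Fin n)).nodup).1 hk).1 _ _

variable [Mul G]

def affineFun {p : ℕ} (e : Fin p → G) (c : G) : (Fin p → G) → G :=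
  fun x => ∑ k, e k * x k + c

theorem affineFun_zero (hzero : ∀ a : G, a * 0 = 0) {p : ℕ} (e : Fin p → G) (c : G) :
    affineFun e c 0 = c := by
  simp [affineFun, hzero]

theorem affineFun_single [One G] (hmul_one : ∀ a : G, a * 1 = a) (hzero : ∀ a : G, a * 0 = 0)
    {p : ℕ} (e : Fin p → G) (c : G) (t : Fin p) :
    affineFun e c (Pi.single t 1) = e t + c := by
  rw [affineFun, Fintype.sum_eq_single t fun k hk => by rw [Pi.single_eq_of_ne hk, hzero],
    Pi.single_eq_same, hmul_one]

theorem affineFun_comp_perm {p : ℕ} (e : Fin p → G) (c : G) (σ : Equiv.Perm (Fin p))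
    (x : Fin p → G) : affineFun (e ∘ σ) c (x ∘ σ) = affineFun e c x := by
  simp only [affineFun, Function.comp_apply]
  congr 1
  exact Fintype.sum_equiv σ _ _ fun k => rfl

theorem funEquiv_affineFun_iff [One G] (hmul_one : ∀ a : G, a * 1 = a) (hzero : ∀ a : G, a * 0 = 0)
    {p : ℕ} {e e' : Fin p → G} {c c' : G} (hc : Function.Injective (· + c)) :
    funEquiv (affineFun e c) (affineFun e' c') ↔ c = c' ∧ univ.val.map e = univ.val.map e' := by
  constructor
  · rintro ⟨σ, hσ⟩
    have hcc : c = c' := by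
      have h0 := hσ 0
      rw [affineFun_zero hzero] at h0
      exact h0.trans (affineFun_zero hzero e' c')
    refine ⟨hcc, ?_⟩
    have he : e = e' ∘ σ.symm := funext fun t => hc <| by
      have hsingle : (fun i => (Pi.single t 1 : Fin p → G) (σ i)) = Pi.single (σ.symm t) 1 := by
        ext i
        simp [Pi.single_apply, Equiv.eq_symm_apply]
      simpa [affineFun_single hmul_one hzero, hsingle, ← hcc] using hσ (Pi.single t 1)
    rw [he, ← Multiset.map_map, Multiset.map_univ_val_equiv]
  · rintro ⟨rfl, he⟩
    obtain ⟨σ, hσ⟩ := Fintype.exists_perm_comp_eq_of_map_univ_eq he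
    refine ⟨σ.symm, fun x => ?_⟩
    rw [show e = e' ∘ σ from funext fun i => (hσ i).symm, ← affineFun_comp_perm _ c σ.symm]
    simp [Function.comp_def]

theorem funMinor_affineFun (hdist : ∀ a b c : G, (a + b) * c = a * c + b * c) {n : ℕ}
    (a : Fin (n + 1) → G) (c : G) {i j : Fin (n + 1)} (hij : i < j) :
    funMinor (affineFun a c) i j hij = affineFun (minorCoeff a hij) c := by
  funext x
  rw [funMinor_eq_insertNth, affineFun, affineFun, Fin.sum_univ_succAbove _ j]
  simp only [Fin.insertNth_apply_same, Fin.insertNth_apply_succAbove]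
  set i' := i.castPred (Fin.ne_last_of_lt hij)
  have hi' : j.succAbove i' = i := Fin.succAbove_castPred_of_lt j i hij
  rw [Fintype.sum_eq_add_sum_compl i', Fintype.sum_eq_add_sum_compl i', minorCoeff,
    Function.update_self, hi', hdist]
  have hrest : ∑ k ∈ {i'}ᶜ, Function.update (a ∘ j.succAbove) i' (a i + a j) k * x k
      = ∑ k ∈ {i'}ᶜ, a (j.succAbove k) * x k :=
    sum_congr rfl fun k hk => by
      rw [Function.update_of_ne (by simpa using hk), Function.comp_apply]
  rw [hrest]
  abel_nf

theorem rel_fminors_affineFun_iff [One G] [DecidableEq G] (hmul_one : ∀ a : G, a * 1 = a)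
    (hdist : ∀ a b c : G, (a + b) * c = a * c + b * c) (hzero : ∀ a : G, a * 0 = 0) {n : ℕ}
    (hn : 1 ≤ n) (a b : Fin (n + 1) → G) {c d : G} (hc : Function.Injective (· + c)) :
    Multiset.Rel funEquiv (fminors (affineFun a c)) (fminors (affineFun b d))
      ↔ c = d ∧ sumDeck (univ.val.map a) = sumDeck (univ.val.map b) := by
  set S := univ.filter fun p : Fin (n + 1) × Fin (n + 1) => p.1 < p.2
  have h01 : ((⟨0, by omega⟩, ⟨1, by omega⟩) : Fin (n + 1) × Fin (n + 1)) ∈ S :=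
    mem_filter.2 ⟨mem_univ _, Fin.mk_lt_mk.2 Nat.zero_lt_one⟩
  have hS : S.attach.val ≠ 0 := fun h =>
    (attach_nonempty_iff.2 ⟨_, h01⟩).ne_empty (val_eq_zero.1 h)
  have hdeck : ∀ w : Fin (n + 1) → G, sumDeck (univ.val.map w)
      = S.attach.val.map fun p => (w p.1.1 + w p.1.2) ::ₘ (univ.val.map w - {w p.1.1, w p.1.2}) :=
    fun w => (sumDeck_map_univ w).symm.trans (Multiset.attach_map_val' S.val _).symm
  rw [fminors, fminors, Multiset.rel_map]
  simp_rw [funMinor_affineFun hdist, funEquiv_affineFun_iff hmul_one hzero hc, map_minorCoeff]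
  rw [Multiset.rel_const_and_iff hS, ← Multiset.rel_map (f := fun p : S => _ ::ₘ _),
    Multiset.rel_eq, hdeck, hdeck]

end AffineFunctions

theorem stmt15 {G : Type*} [AddCommMonoid G] [Mul G] [One G]
    (hmul_one : ∀ a : G, a * 1 = a)
    (hdist : ∀ a b c : G, (a + b) * c = a * c + b * c)
    (hzero : ∀ a : G, a * 0 = 0)
    {n : ℕ} (hn : 4 ≤ n + 1)
    (a b : Fin (n + 1) → G) (c d : G)
    (f g : (Fin (n + 1) → G) → G)
    (hf : ∀ x : Fin (n + 1) → G, f x = (∑ i, a i * x i) + c)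
    (hg : ∀ x : Fin (n + 1) → G, g x = (∑ i, b i * x i) + d)
    (hcase : (c = 0 ∧ d = 0) ∨ (∀ u v w : G, u + v = u + w → v = w)) :
    Multiset.Rel funEquiv (fminors f) (fminors g) ↔ funEquiv f g := by
  classical
  have hc : Function.Injective (· + c) := by
    rcases hcase with ⟨rfl, -⟩ | hcancel
    · exact fun u v huv => by simpa using huv
    · exact fun u v huv => hcancel c u v (by simpa [add_comm] using huv)
  obtain rfl : f = affineFun a c := funext hf
  obtain rfl : g = affineFun b d := funext hg
  rw [rel_fminors_affineFun_iff hmul_one hdist hzero (by omega) a b hc,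
    funEquiv_affineFun_iff hmul_one hzero hc]
  have hcard : (Finset.univ.val.map b).card = (Finset.univ.val.map a).card := by simp
  exact and_congr_right fun _ =>
    ⟨eq_of_sumDeck_eq (by simpa using hn) hcard, congrArg sumDeck⟩
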